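/- For all u, v ∈ V: A*_L(u⋆v) = K(u)⋆A*_L(v) + A*_L(u)⋆v; B*_L(u⋆v) = K⁻¹(u)⋆B*_L(v) + B*_L(u)⋆v; A*_R(u⋆v) = u⋆A*_R(v) + A*_R(u)⋆K(v); B*_R(u⋆v) = u⋆B*_R(v) + B*_R(u)⋆K⁻¹(v). In particular, A*_L is a (K,I)-derivation, B*_L is a (K⁻¹,I)-derivation, A*_R is an (I,K)-derivation, and B*_R is an (I,K⁻¹)-derivation of the q-shuffle algebra (V,⋆). -/

import Mathlib

noncomputable section
namespace SqPaper

/-- The two letters: `0 ↦ A`, `1 ↦ B`. -/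
abbrev Ltr := Fin 2
def lA : Ltr := 0
def lB : Ltr := 1

/-- The pairing `⟨ , ⟩` on letters: `⟨A,A⟩=⟨B,B⟩=2`, `⟨A,B⟩=⟨B,A⟩=-2`. -/
def brk (x y : Ltr) : ℤ := if x = y then 2 else -2

variable (F : Type*) [Field F]

/-- The free algebra `V` on the two generators, realized as the monoid algebra of the
free monoid on two letters; the words form the standard basis. -/
abbrev FA := MonoidAlgebra F (FreeMonoid Ltr)

/-- The standard basis vector attached to a word (list of letters). -/
def wd (l : List Ltr) : FA F := MonoidAlgebra.single (FreeMonoid.ofList l) 1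

def Agen : FA F := wd F [lA]
def Bgen : FA F := wd F [lB]

/-- View an element of `V` as a finitely supported function on words. -/
def fsp (v : FA F) : FreeMonoid Ltr →₀ F := v.coeff

/-- The symmetric bilinear form on `V` for which the standard basis of words is orthonormal. -/
def form (u v : FA F) : F := (fsp F u).sum fun w c => c * (fsp F v) w

/-- Extend a function on words to an `F`-linear map on `V`. -/
def mkMap {M : Type*} [AddCommMonoid M] [Module F M] (f : List Ltr → M) :
    FA F →ₗ[F] M :=
  (Finsupp.lsum F fun w => LinearMap.toSpanSingleton F M (f (FreeMonoid.toList w))) ∘ₗ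
    (MonoidAlgebra.coeffLinearEquiv F).toLinearMap

/-- `[3]_q = (q³ - q⁻³)/(q - q⁻¹)`. -/
def tri (q : F) : F := (q ^ 3 - q⁻¹ ^ 3) / (q - q⁻¹)

/-- The q-shuffle product on words. -/
def shufW (q : F) : List Ltr → List Ltr → FA F
  | [], v => wd F v
  | u, [] => wd F u
  | a :: u, b :: v =>
      wd F [a] * shufW q u (b :: v) +
        (q ^ (((a :: u).map (fun x => brk x b)).sum)) • (wd F [b] * shufW q (a :: u) v)
  termination_by u v => u.length + v.length

/-- The q-shuffle product `⋆` on `V`, as a bilinear map. -/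
def qshuf (q : F) : FA F →ₗ[F] FA F →ₗ[F] FA F :=
  mkMap F fun u => mkMap F fun v => shufW F q u v

/-- Iterated `⋆`-product of the letters of a word. -/
def thetaW (q : F) : List Ltr → FA F
  | [] => 1
  | a :: t => qshuf F q (wd F [a]) (thetaW q t)

/-- `θ : V → V`, the algebra homomorphism from the free algebra to the q-shuffle algebra
with `θ(A) = A`, `θ(B) = B`. -/
def theta (q : F) : FA F →ₗ[F] FA F := mkMap F fun l => thetaW F q l

/-- `A_L`, left multiplication by `A` in the free algebra. -/
def AL : FA F →ₗ[F] FA F := LinearMap.mulLeft F (Agen F)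
def BL : FA F →ₗ[F] FA F := LinearMap.mulLeft F (Bgen F)
def AR : FA F →ₗ[F] FA F := LinearMap.mulRight F (Agen F)
def BR : FA F →ₗ[F] FA F := LinearMap.mulRight F (Bgen F)

/-- `X*_L` (for the letter `x`): deletes the letter `x` from the front of a word. -/
def delL (x : Ltr) : FA F →ₗ[F] FA F :=
  mkMap F fun l => if l.head? = some x then wd F l.tail else 0

/-- `X*_R` (for the letter `x`): deletes the letter `x` from the end of a word. -/
def delR (x : Ltr) : FA F →ₗ[F] FA F :=
  mkMap F fun l => if l.getLast? = some x then wd F l.dropLast else 0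

/-- `X_ℓ`: left q-shuffle multiplication by the letter `x`. -/
def shL (q : F) (x : Ltr) : FA F →ₗ[F] FA F := qshuf F q (wd F [x])

/-- `X_r`: right q-shuffle multiplication by the letter `x`. -/
def shR (q : F) (x : Ltr) : FA F →ₗ[F] FA F := (qshuf F q).flip (wd F [x])

/-- `X*_ℓ`: the weighted deletion map, deleting an occurrence of the letter `x`
with weight `q^{⟨v₁,x⟩+⋯+⟨v_{i-1},x⟩}`. -/
def lowL (q : F) (x : Ltr) : FA F →ₗ[F] FA F :=
  mkMap F fun l =>
    ∑ i ∈ Finset.range l.length,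
      if l[i]? = some x then
        (q ^ (((l.take i).map (fun y => brk y x)).sum)) • wd F (l.eraseIdx i)
      else 0

/-- `X*_r`: the weighted deletion map, deleting an occurrence of the letter `x`
with weight `q^{⟨vₙ,x⟩+⋯+⟨v_{i+1},x⟩}`. -/
def lowR (q : F) (x : Ltr) : FA F →ₗ[F] FA F :=
  mkMap F fun l =>
    ∑ i ∈ Finset.range l.length,
      if l[i]? = some x then
        (q ^ (((l.drop (i + 1)).map (fun y => brk y x)).sum)) • wd F (l.eraseIdx i)
      else 0

/-- `K`, the algebra automorphism of the free algebra `V` with `K(A) = q²A`, `K(B) = q⁻²B`;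
on a word `v = v₁⋯vₙ` it acts as `K(v) = v·q^{⟨v₁,A⟩+⋯+⟨vₙ,A⟩}`. -/
def Kop (q : F) : FA F →ₗ[F] FA F :=
  mkMap F fun l => (q ^ ((l.map (fun y => brk y lA)).sum)) • wd F l

/-- `K⁻¹`; on a word `v = v₁⋯vₙ` it acts as `K⁻¹(v) = v·q^{⟨v₁,B⟩+⋯+⟨vₙ,B⟩}`. -/
def Kinv (q : F) : FA F →ₗ[F] FA F :=
  mkMap F fun l => (q ^ ((l.map (fun y => brk y lB)).sum)) • wd F l

/-- `T`, the automorphism of the free algebra swapping `A` and `B`. -/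
def Top : FA F →ₗ[F] FA F :=
  mkMap F fun l => wd F (l.map (fun x => if x = lA then lB else lA))

/-- `Â = Q(A_L − K B_R)` and `B̂ = Q(B_L − K⁻¹ A_R)` where `Q = 1 - q²`. -/
def hatOp (q : F) (a : Ltr) : FA F →ₗ[F] FA F :=
  if a = lA then (1 - q ^ 2) • (AL F - Kop F q ∘ₗ BR F)
  else (1 - q ^ 2) • (BL F - Kinv F q ∘ₗ AR F)

def phiW (q : F) : List Ltr → FA F
  | [] => 1
  | a :: t => hatOp F q a (phiW q t)

/-- The map `φ`: `φ(1) = 1` and `φ(v₁⋯vₙ) = v̂₁v̂₂⋯v̂ₙ(1)`. -/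
def phi (q : F) : FA F →ₗ[F] FA F := mkMap F fun l => phiW F q l

/-- `ψ = K B_R A*_L + K⁻¹ A_R B*_L`. -/
def psi (q : F) : FA F →ₗ[F] FA F :=
  Kop F q ∘ₗ BR F ∘ₗ delL F lA + Kinv F q ∘ₗ AR F ∘ₗ delL F lB

/-- `V_n`, the span of the words of length `n`. -/
def Vn (n : ℕ) : Submodule F (FA F) :=
  Submodule.span F { x | ∃ l : List Ltr, l.length = n ∧ x = wd F l }

/-- `J⁺ = A³B − [3]_q A²BA + [3]_q ABA² − BA³`. -/
def Jp (q : F) : FA F :=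
  Agen F ^ 3 * Bgen F - tri F q • (Agen F ^ 2 * Bgen F * Agen F)
    + tri F q • (Agen F * Bgen F * Agen F ^ 2) - Bgen F * Agen F ^ 3

/-- `J⁻ = B³A − [3]_q B²AB + [3]_q BAB² − AB³`. -/
def Jm (q : F) : FA F :=
  Bgen F ^ 3 * Agen F - tri F q • (Bgen F ^ 2 * Agen F * Bgen F)
    + tri F q • (Bgen F * Agen F * Bgen F ^ 2) - Agen F * Bgen F ^ 3

/-- `J`, the two-sided ideal of the free algebra generated by `J⁺` and `J⁻`
(realized as the `F`-span of the elements `a·J^±·b`). -/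
def Jsub (q : F) : Submodule F (FA F) :=
  Submodule.span F { x | ∃ a b : FA F, x = a * Jp F q * b ∨ x = a * Jm F q * b }

/-- `U`, the subalgebra of the q-shuffle algebra `(V,⋆)` generated by `A` and `B`,
realized as the span of all `⋆`-products of the letters. -/
def Usub (q : F) : Submodule F (FA F) :=
  Submodule.span F (Set.range fun l : List Ltr => thetaW F q l)

/-- A `□_q`-module structure on an `F`-vector space `M`: four operators
`x₀, x₁, x₂, x₃` (indices mod 4) satisfying the q-Weyl and q-Serre relations. -/
structure SqAct (q : F) (M : Type*) [AddCommGroup M] [Module F M] where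
  x : ZMod 4 → Module.End F M
  weyl : ∀ i : ZMod 4,
    q • (x i * x (i + 1)) - q⁻¹ • (x (i + 1) * x i) = (q - q⁻¹) • (1 : Module.End F M)
  serre : ∀ i : ZMod 4,
    x i ^ 3 * x (i + 2) - tri F q • (x i ^ 2 * x (i + 2) * x i)
      + tri F q • (x i * x (i + 2) * x i ^ 2) - x (i + 2) * x i ^ 3 = 0

variable {F} {q : F} {M : Type*} [AddCommGroup M] [Module F M]

/-- A `□_q`-module `M` is generated by `ξ` if no proper submodule
(subspace invariant under all the `xᵢ`) contains `ξ`. -/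
def SqAct.Gen (S : SqAct F q M) (ξ : M) : Prop :=
  ∀ W : Submodule F M, (∀ i : ZMod 4, ∀ m ∈ W, S.x i m ∈ W) → ξ ∈ W → W = ⊤

/-- `W_n`: the span of the vectors `u₁u₂⋯uₙ·ξ` with each `uᵢ ∈ {x₀, x₂}`. -/
def SqAct.Wn (S : SqAct F q M) (ξ : M) (n : ℕ) : Submodule F M :=
  Submodule.span F
    { m | ∃ l : List (ZMod 4), l.length = n ∧ (∀ i ∈ l, i = 0 ∨ i = 2) ∧
        m = l.foldr (fun i acc => S.x i acc) ξ }

/-!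
All four identities are bilinear in `u, v`, so it suffices to check them on words. For the left
deletions this is immediate from the defining recursion of the q-shuffle on first letters. For
the right deletions one first needs the mirror-image recursion on last letters
(`shufW_append_singleton`), proved by induction on the total length; the symmetry of `⟨ , ⟩`
is what makes the two recursions agree.
-/

section Derivations

variable {N : Type*} [AddCommMonoid N] [Module F N]

lemma mkMap_wd (f : List Ltr → N) (l : List Ltr) : mkMap F f (wd F l) = f l := by
  change Finsupp.lsum F (fun w => LinearMap.toSpanSingleton F N (f (FreeMonoid.toList w)))
    (Finsupp.single (FreeMonoid.ofList l) (1 : F)) = f l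
  simp

lemma linearMap_ext_wd {f g : FA F →ₗ[F] N} (h : ∀ l, f (wd F l) = g (wd F l)) : f = g :=
  MonoidAlgebra.lhom_ext' fun w => LinearMap.ext_ring (h (FreeMonoid.toList w))

lemma linearMap_ext_wd₂ {f g : FA F →ₗ[F] FA F →ₗ[F] N}
    (h : ∀ l m, f (wd F l) (wd F m) = g (wd F l) (wd F m)) : f = g :=
  linearMap_ext_wd fun l => linearMap_ext_wd (h l)

lemma wd_mul (l m : List Ltr) : wd F l * wd F m = wd F (l ++ m) := by
  rw [wd, wd, wd, MonoidAlgebra.single_mul_single, one_mul]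
  rfl

def weight (q : F) (x : Ltr) (l : List Ltr) : F := q ^ (l.map fun y => brk y x).sum

@[simp] lemma weight_nil (x : Ltr) : weight q x [] = 1 := by
  simp [weight]

lemma weight_cons (hq : q ≠ 0) (x y : Ltr) (l : List Ltr) :
    weight q x (y :: l) = q ^ brk y x * weight q x l := by
  simp [weight, zpow_add₀ hq]

lemma weight_append (hq : q ≠ 0) (x : Ltr) (l m : List Ltr) :
    weight q x (l ++ m) = weight q x l * weight q x m := by
  simp [weight, zpow_add₀ hq]

lemma brk_comm (x y : Ltr) : brk x y = brk y x := by
  simp [brk, eq_comm]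

/-- `K` for `x = A` and `K⁻¹` for `x = B`: definitionally `Kop F q` and `Kinv F q`. -/
def twist (q : F) (x : Ltr) : FA F →ₗ[F] FA F := mkMap F fun l => weight q x l • wd F l

lemma twist_wd (x : Ltr) (l : List Ltr) : twist q x (wd F l) = weight q x l • wd F l :=
  mkMap_wd _ l

lemma qshuf_wd (l m : List Ltr) : qshuf F q (wd F l) (wd F m) = shufW F q l m := by
  rw [qshuf, mkMap_wd, mkMap_wd]

lemma shufW_nil_left (m : List Ltr) : shufW F q [] m = wd F m := by
  rw [shufW]

lemma shufW_nil_right (l : List Ltr) : shufW F q l [] = wd F l := by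
  cases l <;> rw [shufW]
  exact List.cons_ne_nil _ _

lemma shufW_cons_cons (a b : Ltr) (u v : List Ltr) :
    shufW F q (a :: u) (b :: v) =
      wd F [a] * shufW F q u (b :: v) +
        weight q b (a :: u) • (wd F [b] * shufW F q (a :: u) v) := by
  rw [shufW, weight]

theorem shufW_append_singleton (hq : q ≠ 0) (l v : List Ltr) (p s : Ltr) :
    shufW F q (l ++ [p]) (v ++ [s]) =
      shufW F q (l ++ [p]) v * wd F [s] +
        weight q p (v ++ [s]) • (shufW F q l (v ++ [s]) * wd F [p]) := by
  match l, v with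
  | [], [] =>
    simp [shufW_cons_cons, shufW_nil_left, shufW_nil_right, weight, brk_comm]
  | [], b :: v =>
    have ih := shufW_append_singleton hq [] v p s
    simp only [List.nil_append, shufW_nil_left] at ih
    simp only [List.nil_append, List.cons_append, shufW_cons_cons, shufW_nil_left, ih]
    simp only [mul_add, add_mul, smul_add, smul_smul, mul_smul_comm, smul_mul_assoc, mul_assoc,
      wd_mul, List.cons_append, List.nil_append, weight_cons hq, weight_append hq, weight_nil,
      brk_comm]
    module
  | a :: l, [] =>
    have ih := shufW_append_singleton hq l [] p s
    simp only [List.nil_append, shufW_nil_right] at ih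
    simp only [List.cons_append, List.nil_append, shufW_cons_cons, shufW_nil_right, ih]
    simp only [mul_add, add_mul, smul_add, smul_smul, mul_smul_comm, smul_mul_assoc, mul_assoc,
      wd_mul, List.cons_append, List.nil_append, weight_cons hq, weight_append hq, weight_nil,
      brk_comm]
    module
  | a :: l, b :: v =>
    have ih₁ := shufW_append_singleton hq l (b :: v) p s
    have ih₂ := shufW_append_singleton hq (a :: l) v p s
    simp only [List.cons_append] at ih₁ ih₂
    simp only [List.cons_append, shufW_cons_cons, ih₁, ih₂]
    simp only [mul_add, add_mul, smul_add, smul_smul, mul_smul_comm, smul_mul_assoc, mul_assoc,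
      weight_cons hq, weight_append hq, weight_nil, brk_comm]
    module
termination_by l.length + v.length

lemma delL_wd (x : Ltr) (l : List Ltr) :
    delL F x (wd F l) = if l.head? = some x then wd F l.tail else 0 :=
  mkMap_wd _ l

lemma delR_wd (x : Ltr) (l : List Ltr) :
    delR F x (wd F l) = if l.getLast? = some x then wd F l.dropLast else 0 :=
  mkMap_wd _ l

lemma delL_wd_mul (x a : Ltr) (w : FA F) :
    delL F x (wd F [a] * w) = if a = x then w else 0 := by
  have key :
      delL F x ∘ₗ LinearMap.mulLeft F (wd F [a]) = if a = x then LinearMap.id else 0 :=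
    linearMap_ext_wd fun l => by split_ifs <;> simp [*, wd_mul, delL_wd]
  rw [← LinearMap.mulLeft_apply (R := F), ← LinearMap.comp_apply, key]
  split_ifs <;> rfl

lemma delR_mul_wd (x a : Ltr) (w : FA F) :
    delR F x (w * wd F [a]) = if a = x then w else 0 := by
  have key :
      delR F x ∘ₗ LinearMap.mulRight F (wd F [a]) = if a = x then LinearMap.id else 0 :=
    linearMap_ext_wd fun l => by split_ifs <;> simp [*, wd_mul, delR_wd]
  rw [← LinearMap.mulRight_apply (R := F), ← LinearMap.comp_apply, key]
  split_ifs <;> rfl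

lemma qshuf_wd_nil_left (w : FA F) : qshuf F q (wd F []) w = w := by
  have key : qshuf F q (wd F []) = LinearMap.id :=
    linearMap_ext_wd fun l => by simp [qshuf_wd, shufW_nil_left]
  rw [key, LinearMap.id_apply]

lemma qshuf_wd_nil_right (w : FA F) : qshuf F q w (wd F []) = w := by
  have key : (qshuf F q).flip (wd F []) = LinearMap.id :=
    linearMap_ext_wd fun l => by simp [qshuf_wd, shufW_nil_right]
  exact LinearMap.congr_fun key w

lemma delL_shufW (x : Ltr) (l m : List Ltr) :
    delL F x (shufW F q l m) =
      weight q x l • qshuf F q (wd F l) (delL F x (wd F m)) +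
        qshuf F q (delL F x (wd F l)) (wd F m) := by
  match l, m with
  | [], m => simp [shufW_nil_left, delL_wd, qshuf_wd_nil_left]
  | a :: u, [] => simp [shufW_nil_right, delL_wd, qshuf_wd_nil_right]
  | a :: u, b :: v =>
    rw [shufW_cons_cons, map_add, map_smul, delL_wd_mul, delL_wd_mul, delL_wd, delL_wd]
    simp only [List.head?_cons, List.tail_cons, Option.some.injEq]
    by_cases hax : a = x <;> by_cases hbx : b = x <;> subst_vars <;> simp [*, qshuf_wd, add_comm]

lemma delR_shufW (hq : q ≠ 0) (x : Ltr) (l m : List Ltr) :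
    delR F x (shufW F q l m) =
      qshuf F q (wd F l) (delR F x (wd F m)) +
        weight q x m • qshuf F q (delR F x (wd F l)) (wd F m) := by
  rcases List.eq_nil_or_concat l with rfl | ⟨u, p, rfl⟩
  · simp [shufW_nil_left, delR_wd, qshuf_wd_nil_left]
  rcases List.eq_nil_or_concat m with rfl | ⟨v, s, rfl⟩
  · simp [shufW_nil_right, delR_wd, qshuf_wd_nil_right]
  simp only [List.concat_eq_append]
  rw [shufW_append_singleton hq, map_add, map_smul, delR_mul_wd, delR_mul_wd, delR_wd, delR_wd]
  simp only [List.getLast?_concat, List.dropLast_concat, Option.some.injEq]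
  by_cases hpx : p = x <;> by_cases hsx : s = x <;> subst_vars <;> simp [*, qshuf_wd, add_comm]

theorem delL_qshuf (x : Ltr) (u v : FA F) :
    delL F x (qshuf F q u v) =
      qshuf F q (twist q x u) (delL F x v) + qshuf F q (delL F x u) v := by
  have key : (qshuf F q).compr₂ (delL F x) =
      ((qshuf F q) ∘ₗ twist q x).compl₂ (delL F x) + (qshuf F q) ∘ₗ delL F x :=
    linearMap_ext_wd₂ fun l m => by simp [qshuf_wd, twist_wd, delL_shufW]
  exact LinearMap.congr_fun₂ key u v

theorem delR_qshuf (hq : q ≠ 0) (x : Ltr) (u v : FA F) :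
    delR F x (qshuf F q u v) =
      qshuf F q u (delR F x v) + qshuf F q (delR F x u) (twist q x v) := by
  have key : (qshuf F q).compr₂ (delR F x) =
      (qshuf F q).compl₂ (delR F x) + ((qshuf F q) ∘ₗ delR F x).compl₂ (twist q x) :=
    linearMap_ext_wd₂ fun l m => by simp [qshuf_wd, twist_wd, delR_shufW hq]
  exact LinearMap.congr_fun₂ key u v

end Derivations

end SqPaper
open SqPaper in
theorem del_derivations_shuffle_general (F : Type*) [Field F] (q : F) (hq : q ≠ 0) :
    ∀ u v : FA F,
      delL F lA (qshuf F q u v) =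
          qshuf F q (Kop F q u) (delL F lA v) + qshuf F q (delL F lA u) v ∧
      delL F lB (qshuf F q u v) =
          qshuf F q (Kinv F q u) (delL F lB v) + qshuf F q (delL F lB u) v ∧
      delR F lA (qshuf F q u v) =
          qshuf F q u (delR F lA v) + qshuf F q (delR F lA u) (Kop F q v) ∧
      delR F lB (qshuf F q u v) =
          qshuf F q u (delR F lB v) + qshuf F q (delR F lB u) (Kinv F q v) :=
  fun u v => ⟨delL_qshuf lA u v, delL_qshuf lB u v, delR_qshuf hq lA u v, delR_qshuf hq lB u v⟩

open SqPaper in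
/-- `A*_L, B*_L, A*_R, B*_R` are twisted derivations of the q-shuffle algebra
`(V,⋆)`: `A*_L` is a `(K,I)`-derivation, `B*_L` a `(K⁻¹,I)`-derivation, `A*_R` an
`(I,K)`-derivation and `B*_R` an `(I,K⁻¹)`-derivation. -/
theorem del_derivations_shuffle (F : Type*) [Field F] (q : F) (hq : q ≠ 0)
    (hq1 : ∀ k : ℕ, 0 < k → q ^ k ≠ 1) :
    ∀ u v : FA F,
      delL F lA (qshuf F q u v) =
          qshuf F q (Kop F q u) (delL F lA v) + qshuf F q (delL F lA u) v ∧
      delL F lB (qshuf F q u v) =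
          qshuf F q (Kinv F q u) (delL F lB v) + qshuf F q (delL F lB u) v ∧
      delR F lA (qshuf F q u v) =
          qshuf F q u (delR F lA v) + qshuf F q (delR F lA u) (Kop F q v) ∧
      delR F lB (qshuf F q u v) =
          qshuf F q u (delR F lB v) + qshuf F q (delR F lB u) (Kinv F q v) :=
  del_derivations_shuffle_general F q hq
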